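/- arXiv:0804.2018 — 3 statements merged into one kernel-verified Lean document; each statement's English description precedes it below -/
import Mathlib

section
/- For every integer n ≥ 4, the polynomial P_n satisfies P_n(x) = x^2 U_{n-2}(x) - 2x U_{n-3}(x) + U_{n-4}(x), where U_j denotes the Chebyshev polynomial of the second kind of degree j. -/
open Finset Polynomial Real

noncomputable section

/-- Binomial coefficient `C(a, b)` for integer lower index, zero when `b < 0` or `b > a`. -/
def chooseZ (a : ℕ) (b : ℤ) : ℤ := if 0 ≤ b then (a.choose b.toNat : ℤ) else 0

/-- `f n k m p = ∑_{i=0}^{n} (-1)^i C(n,i) C(np+m-ip, n+k)`. -/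
def f (n : ℕ) (k : ℤ) (m p : ℕ) : ℤ :=
  ∑ i ∈ Finset.range (n + 1),
    (-1) ^ i * (n.choose i : ℤ) * chooseZ (n * p + m - i * p) ((n : ℤ) + k)

/-- The coefficients `c(n,k,m,p)`. -/
def c (n : ℕ) (k : ℤ) (m p : ℕ) : ℤ :=
  if 0 ≤ k ∧ k ≤ (n : ℤ) ∧ (n : ℤ) % 2 = k % 2 ∧ 2 * (m : ℤ) ≤ (n : ℤ) + k then
    (-1) ^ ((((n : ℤ) - k) / 2).toNat) *
      f ((((n : ℤ) + k - 2 * m) / 2).toNat) (((n : ℤ) - k) / 2) m p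
  else 0

/-- The polynomial `P_{n,m,p}(x) = ∑_{k=0}^n c(n,k,m,p) x^k`, as a real polynomial. -/
def P (n m p : ℕ) : Polynomial ℝ :=
  ∑ k ∈ Finset.range (n + 1), Polynomial.C ((c n (k : ℤ) m p : ℝ)) * Polynomial.X ^ k

/-!
For `p = 2` the summand of `f` involves `C(2(a - i) + m, a + b)`, so Pascal's rule applied twice
gives `f(a + 1, b) = 2 f(a, b) + f(a, b - 1)`; equivalently, `f(a, ·)` has generating function
`(1 + y)^m (2 + y)^a`. On the coefficients this becomes
`c(n + 2, j) = 2 c(n + 1, j - 1) - c(n, j)` once `2m ≤ n + 1`, i.e. `P_{n+2} = 2x P_{n+1} - P_n`.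
This is the Chebyshev recurrence, which the right-hand side satisfies too, and both sides agree
for `n = 3, 4`.
-/

lemma chooseZ_eq_zero_of_neg (a : ℕ) {b : ℤ} (hb : b < 0) : chooseZ a b = 0 := by
  simp [chooseZ, not_le.mpr hb]

lemma chooseZ_eq_zero_of_lt {a : ℕ} {b : ℤ} (hab : (a : ℤ) < b) : chooseZ a b = 0 := by
  simp [chooseZ, show 0 ≤ b by omega, Nat.choose_eq_zero_of_lt (show a < b.toNat by omega)]

lemma chooseZ_succ (a : ℕ) (b : ℤ) : chooseZ (a + 1) b = chooseZ a b + chooseZ a (b - 1) := by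
  rcases lt_trichotomy b 0 with hb | rfl | hb
  · simp [chooseZ_eq_zero_of_neg _ hb, chooseZ_eq_zero_of_neg _ (show b - 1 < 0 by omega)]
  · simp [chooseZ]
  · obtain ⟨b, rfl⟩ : ∃ b' : ℕ, b = b' + 1 := ⟨(b - 1).toNat, by omega⟩
    simp [chooseZ, hb.le, Nat.choose_succ_succ', show ((b : ℤ) + 1).toNat = b + 1 by omega,
      add_comm]

lemma chooseZ_add_two (a : ℕ) (b : ℤ) :
    chooseZ (a + 2) b = chooseZ a b + 2 * chooseZ a (b - 1) + chooseZ a (b - 2) := by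
  rw [chooseZ_succ, chooseZ_succ, chooseZ_succ, sub_sub, one_add_one_eq_two]
  ring

theorem Finset.sum_range_neg_one_pow_mul_choose_succ_mul {R : Type*} [CommRing R] (a : ℕ)
    (g : ℕ → R) :
    ∑ i ∈ range (a + 2), (-1) ^ i * ((a + 1).choose i : R) * g i =
      ∑ i ∈ range (a + 1), (-1) ^ i * (a.choose i : R) * (g i - g (i + 1)) := by
  have hshift : ∑ i ∈ range (a + 1), (-1) ^ (i + 1) * (a.choose (i + 1) : R) * g (i + 1) + g 0 =
      ∑ i ∈ range (a + 1), (-1) ^ i * (a.choose i : R) * g i := by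
    simpa [sum_range_succ _ (a + 1)] using
      (sum_range_succ' (fun i => (-1) ^ i * (a.choose i : R) * g i) (a + 1)).symm
  calc ∑ i ∈ range (a + 2), (-1) ^ i * ((a + 1).choose i : R) * g i
      = ∑ i ∈ range (a + 1), (-1) ^ (i + 1) * (a.choose i : R) * g (i + 1) +
          (∑ i ∈ range (a + 1), (-1) ^ (i + 1) * (a.choose (i + 1) : R) * g (i + 1) + g 0) := by
        simp [sum_range_succ' _ (a + 1), Nat.choose_succ_succ', add_mul, mul_add, sum_add_distrib,
          add_assoc]
    _ = _ := by
        rw [hshift, ← sum_add_distrib]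
        exact sum_congr rfl fun i _ => by ring

lemma f_succ (a : ℕ) (b : ℤ) (m : ℕ) : f (a + 1) b m 2 = 2 * f a b m 2 + f a (b - 1) m 2 := by
  rw [f, sum_range_neg_one_pow_mul_choose_succ_mul, f, f, mul_sum, ← sum_add_distrib]
  refine sum_congr rfl fun i hi => ?_
  have hi : i ≤ a := Nat.lt_succ_iff.mp (mem_range.mp hi)
  rw [show (a + 1) * 2 + m - i * 2 = a * 2 + m - i * 2 + 2 by omega,
    show (a + 1) * 2 + m - (i + 1) * 2 = a * 2 + m - i * 2 by omega, chooseZ_add_two,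
    Nat.cast_succ, show (a + 1 + b - 1 : ℤ) = a + b by ring,
    show (a + 1 + b - 2 : ℤ) = a + (b - 1) by ring]
  ring

lemma f_eq_zero_of_lt {a : ℕ} {b : ℤ} {m p : ℕ} (h : (a * p + m : ℤ) < a + b) : f a b m p = 0 := by
  refine sum_eq_zero fun i _ => ?_
  rw [chooseZ_eq_zero_of_lt (by omega), mul_zero]

lemma f_eq_zero_of_neg (a : ℕ) {b : ℤ} (m : ℕ) (hb : b < 0) : f a b m 2 = 0 := by
  induction a generalizing b with
  | zero => simp [f, chooseZ_eq_zero_of_neg _ hb]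
  | succ a ih => rw [f_succ, ih hb, ih (by omega), mul_zero, add_zero]

lemma c_eq_zero {n : ℕ} {k : ℤ} {m p : ℕ}
    (h : ¬(0 ≤ k ∧ k ≤ n ∧ (n : ℤ) % 2 = k % 2 ∧ 2 * (m : ℤ) ≤ n + k)) : c n k m p = 0 :=
  if_neg h

-- `k` may be negative: then `b > a + m` and both sides vanish.
lemma c_eq_neg_one_pow_mul_f {n : ℕ} {k : ℤ} {m : ℕ} (a b : ℕ) (ha : (n : ℤ) + k = 2 * a + 2 * m)
    (hb : (n : ℤ) - k = 2 * b) : c n k m 2 = (-1) ^ b * f a b m 2 := by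
  by_cases hk : 0 ≤ k
  · rw [c, if_pos (by omega), show ((n : ℤ) - k) / 2 = b by omega,
      show ((n + k - 2 * m : ℤ) / 2).toNat = a by omega, Int.toNat_natCast]
  · rw [c_eq_zero (by omega), f_eq_zero_of_lt (by omega), mul_zero]

lemma c_add_two {n m : ℕ} (hn : 2 * m ≤ n + 1) (j : ℤ) :
    c (n + 2) j m 2 = 2 * c (n + 1) (j - 1) m 2 - c n j m 2 := by
  by_cases hj : 0 ≤ j ∧ j ≤ n + 2 ∧ (n : ℤ) % 2 = j % 2
  · obtain ⟨a, ha⟩ : ∃ a : ℕ, (n : ℤ) + 2 + j = 2 * (a + 1) + 2 * m :=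
      ⟨((n + j - 2 * m) / 2).toNat, by omega⟩
    obtain ⟨_ | b, hb⟩ : ∃ b : ℕ, (n : ℤ) + 2 - j = 2 * b := ⟨((n + 2 - j) / 2).toNat, by omega⟩
    · rw [c_eq_neg_one_pow_mul_f (a + 1) 0 (by omega) (by omega),
        c_eq_neg_one_pow_mul_f a 0 (by omega) (by omega), c_eq_zero (by omega), f_succ,
        f_eq_zero_of_neg a m (show ((0 : ℕ) : ℤ) - 1 < 0 by omega)]
      simp
    · rw [c_eq_neg_one_pow_mul_f (a + 1) (b + 1) (by omega) (by omega),
        c_eq_neg_one_pow_mul_f a (b + 1) (by omega) (by omega),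
        c_eq_neg_one_pow_mul_f a b (by omega) (by omega), f_succ,
        Nat.cast_succ, add_sub_cancel_right, pow_succ]
      ring
  · rw [c_eq_zero (by omega), c_eq_zero (by omega), c_eq_zero (by omega)]
    ring

lemma coeff_P (n m p j : ℕ) : (P n m p).coeff j = c n j m p := by
  simp only [P, finsetSum_coeff, coeff_C_mul, coeff_X_pow, mul_ite, mul_one, mul_zero,
    sum_ite_eq, mem_range]
  split_ifs with hj
  · rfl
  · rw [c_eq_zero (by omega), Int.cast_zero]

lemma P_add_two {n m : ℕ} (hn : 2 * m ≤ n + 1) :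
    P (n + 2) m 2 = 2 * X * P (n + 1) m 2 - P n m 2 := by
  ext (_ | j)
  · rw [coeff_sub, mul_assoc, coeff_ofNat_mul, coeff_X_mul_zero, coeff_P, coeff_P, c_add_two hn,
      c_eq_zero (by omega)]
    simp
  · rw [coeff_sub, mul_assoc, coeff_ofNat_mul, coeff_X_mul, coeff_P, coeff_P, coeff_P,
      c_add_two hn, Nat.cast_succ, add_sub_cancel_right]
    push_cast
    ring

lemma P_three_two_two : P 3 2 2 = 2 * X ^ 3 - 2 * X := by
  have hc : (c 3 0 2 2, c 3 1 2 2, c 3 2 2 2, c 3 3 2 2) = (0, -2, 0, 2) := by decide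
  simp only [Prod.mk.injEq] at hc
  simp only [P, sum_range_succ, sum_range_zero, Nat.cast_ofNat, Nat.cast_zero, Nat.cast_one, hc,
    map_intCast]
  push_cast
  ring

lemma P_four_two_two : P 4 2 2 = 4 * X ^ 4 - 5 * X ^ 2 + 1 := by
  have hc : (c 4 0 2 2, c 4 1 2 2, c 4 2 2 2, c 4 3 2 2, c 4 4 2 2) = (1, 0, -5, 0, 4) := by
    decide
  simp only [Prod.mk.injEq] at hc
  simp only [P, sum_range_succ, sum_range_zero, Nat.cast_ofNat, Nat.cast_zero, Nat.cast_one, hc,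
    map_intCast]
  push_cast
  ring

open Polynomial.Chebyshev in
lemma P_two_two_add_three (n : ℕ) :
    P (n + 3) 2 2 = X ^ 2 * U ℝ (n + 1) - 2 * X * U ℝ n + U ℝ (n - 1) := by
  induction n using Nat.twoStepInduction with
  | zero =>
    rw [zero_add, P_three_two_two, Nat.cast_zero, zero_add, zero_sub, U_one, U_zero, U_neg_one]
    ring
  | one =>
    rw [P_four_two_two, Nat.cast_one, one_add_one_eq_two, sub_self, U_two, U_one, U_zero]
    ring
  | more n ih₀ ih₁ =>
    have h₂ := U_add_two ℝ (n + 1)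
    have h₁ := U_add_two ℝ n
    have h₀ := U_add_two ℝ (n - 1)
    rw [P_add_two (by omega), ih₁, ih₀]
    push_cast
    ring_nf at h₀ h₁ h₂ ⊢
    linear_combination 2 * X * h₁ - X ^ 2 * h₂ - h₀

/-- For n ≥ 4, `P_n(x) = x² U_{n-2}(x) - 2x U_{n-3}(x) + U_{n-4}(x)`. -/
theorem statement1 (n : ℕ) (hn : 4 ≤ n) :
    P n 2 2 = Polynomial.X ^ 2 * Polynomial.Chebyshev.U ℝ ((n : ℤ) - 2)
      - 2 * Polynomial.X * Polynomial.Chebyshev.U ℝ ((n : ℤ) - 3)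
      + Polynomial.Chebyshev.U ℝ ((n : ℤ) - 4) := by
  obtain ⟨k, rfl⟩ : ∃ k, n = k + 3 := ⟨n - 3, by omega⟩
  rw [P_two_two_add_three, show ((k + 3 : ℕ) : ℤ) - 2 = k + 1 by omega,
    show ((k + 3 : ℕ) : ℤ) - 3 = k by omega, show ((k + 3 : ℕ) : ℤ) - 4 = k - 1 by omega]
end
end

section
/- For all integers n, k, m ≥ 0 one has f(n,k,m,2) = Σ_{i=0}^{n} Σ_{j=0}^{i} C(n,i) C(i,j) C(m, k-i+j), where binomial coefficients with negative or out-of-range lower index are 0. -/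
/-! `f n k m p` is the coefficient of `x ^ (n + k)` in `(1 + x) ^ m * ((1 + x) ^ p - 1) ^ n`.
For `p = 2` this polynomial is `x ^ n * (x + 2) ^ n * (1 + x) ^ m`, and expanding
`(x + 2) ^ n = ((1 + x) + 1) ^ n` gives `∑ i, C(n,i) (1 + x) ^ (i + m)`; Vandermonde's identity
splits `C(i + m, k)` into the inner sum. -/

open Finset Polynomial Real

noncomputable section

lemma chooseZ_natCast (a b : ℕ) : chooseZ a b = a.choose b := by
  simp [chooseZ]

lemma choose_add_eq_sum_chooseZ (i m k : ℕ) :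
    ((i + m).choose k : ℤ) =
      ∑ j ∈ range (i + 1), (i.choose j : ℤ) * chooseZ m ((k : ℤ) - i + j) := by
  set g : ℕ → ℤ := fun j => i.choose j * chooseZ m ((k : ℤ) - j)
  have hreflect : ∑ j ∈ range (i + 1), (i.choose j : ℤ) * chooseZ m ((k : ℤ) - i + j) =
      ∑ j ∈ range (i + 1), g j := by
    rw [← sum_range_reflect g]
    refine sum_congr rfl fun j hj => ?_
    have hji : j ≤ i := mem_range_succ_iff.mp hj
    simp only [g, add_tsub_cancel_right, Nat.cast_sub hji]
    rw [Nat.choose_symm hji]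
    ring_nf
  -- `g` vanishes beyond `min i k`, so both truncated sums equal its `finsum`.
  have hsupp_i : Function.support g ⊆ range (i + 1) := fun j hj => by
    by_contra hji
    simp_all [g, Nat.choose_eq_zero_of_lt]
  have hsupp_k : Function.support g ⊆ range (k + 1) := fun j hj => by
    by_contra hjk
    simp_all [g, chooseZ]
  rw [hreflect, ← finsum_eq_sum_of_support_subset g hsupp_i,
    finsum_eq_sum_of_support_subset g hsupp_k, Nat.add_choose_eq,
    Nat.sum_antidiagonal_eq_sum_range_succ_mk]
  push_cast
  refine sum_congr rfl fun j hj => ?_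
  rw [← chooseZ_natCast m, Nat.cast_sub (mem_range_succ_iff.mp hj)]

lemma f_eq_coeff (n k m p : ℕ) :
    f n k m p = ((X + 1 : ℤ[X]) ^ m * ((X + 1) ^ p - 1) ^ n).coeff (n + k) := by
  rw [← neg_add_eq_sub, add_pow (-1), mul_sum, finsetSum_coeff, f]
  refine sum_congr rfl fun i hi => ?_
  have hin : i ≤ n := mem_range_succ_iff.mp hi
  have hexp : n * p + m - i * p = (n - i) * p + m := by
    rw [Nat.sub_mul, Nat.sub_add_comm (Nat.mul_le_mul_right p hin)]
  have hterm : (X + 1 : ℤ[X]) ^ m * ((-1) ^ i * ((X + 1) ^ p) ^ (n - i) * (n.choose i : ℤ[X])) =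
      C ((-1) ^ i * (n.choose i : ℤ)) * (X + 1) ^ ((n - i) * p + m) := by
    simp only [map_mul, map_pow, map_neg, map_one, map_natCast]
    ring
  rw [hterm, coeff_C_mul, coeff_X_add_one_pow, hexp, ← chooseZ_natCast _ (n + k), Nat.cast_add]

lemma coeff_X_add_two_pow_mul_X_add_one_pow {R : Type*} [CommSemiring R] (n m k : ℕ) :
    ((X + 2 : R[X]) ^ n * (X + 1) ^ m).coeff k =
      ∑ i ∈ range (n + 1), (n.choose i : R) * ((i + m).choose k : R) := by
  rw [show (X + 2 : R[X]) = (X + 1) + 1 by ring, add_pow, sum_mul, finsetSum_coeff]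
  refine sum_congr rfl fun i _ => ?_
  rw [show (X + 1 : R[X]) ^ i * 1 ^ (n - i) * (n.choose i : R[X]) * (X + 1) ^ m =
      C (n.choose i : R) * (X + 1) ^ (i + m) by simp only [map_natCast]; ring,
    coeff_C_mul, coeff_X_add_one_pow]

/-- For n, k, m ≥ 0,
`f(n,k,m,2) = ∑_{i=0}^{n} ∑_{j=0}^{i} C(n,i) C(i,j) C(m, k-i+j)`. -/
theorem statement14 (n k m : ℕ) :
    f n k m 2 = ∑ i ∈ Finset.range (n + 1), ∑ j ∈ Finset.range (i + 1),
      (n.choose i : ℤ) * (i.choose j : ℤ) * chooseZ m ((k : ℤ) - i + j) := by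
  calc f n k m 2 = ((X + 1 : ℤ[X]) ^ m * ((X + 1) ^ 2 - 1) ^ n).coeff (n + k) := f_eq_coeff ..
    _ = (X ^ n * ((X + 2) ^ n * (X + 1) ^ m)).coeff (k + n) := by
      rw [show (X + 1 : ℤ[X]) ^ 2 - 1 = X * (X + 2) by ring, mul_pow, add_comm n k]
      congr 1
      ring
    _ = ∑ i ∈ range (n + 1), (n.choose i : ℤ) * ((i + m).choose k : ℤ) := by
      rw [coeff_X_pow_mul, coeff_X_add_two_pow_mul_X_add_one_pow]
    _ = _ := by simp_rw [choose_add_eq_sum_chooseZ, mul_sum, mul_assoc]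
end
end

section
/- For integers n ≥ 0 and 0 ≤ k ≤ n, the coefficient of x^k in the Chebyshev polynomial of the second kind U_n equals (-1)^{(n-k)/2} Σ_{i=0}^{k} C((n+k)/2, i) C((n+k)/2 - i, (n-k)/2) when n and k have the same parity, and equals 0 when n and k have different parity. -/
open Finset Polynomial Real

noncomputable section

/-!
Writing `n = k + 2j`, the recurrence `U_{n+2} = 2X U_{n+1} - U_n` turns into
`a(k+1, j+1) = 2 a(k, j+1) - a(k+1, j)` for the coefficient `a(k, j)` of `X^k` in `U_{k+2j}`,
and Pascal's rule shows that `a(k, j) = (-1)^j C(k+j, j) 2^k` solves it; coefficients of the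
other parity vanish along the same recurrence. The binomial sum of the statement is
`C(k+j, j) 2^k` as well, because `C(k+j, i) C(k+j-i, j) = C(k+j, j) C(k, i)`.
-/

namespace Polynomial.Chebyshev

variable {R : Type*} [CommRing R]

theorem coeff_U_add_two_zero (n : ℤ) : (U R (n + 2)).coeff 0 = -(U R n).coeff 0 := by
  simp [U_add_two, mul_assoc, coeff_ofNat_mul]

theorem coeff_U_add_two_succ (n : ℤ) (k : ℕ) :
    (U R (n + 2)).coeff (k + 1) = 2 * (U R (n + 1)).coeff k - (U R n).coeff (k + 1) := by
  rw [U_add_two, coeff_sub, mul_assoc, coeff_ofNat_mul, coeff_X_mul]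

theorem coeff_U_eq_zero_of_lt {n k : ℕ} (h : n < k) : (U R n).coeff k = 0 := by
  induction n using Nat.twoStepInduction generalizing k with
  | zero => simp [coeff_one, h.ne']
  | one => simp [coeff_X, mul_comm (2 : R[X]), coeff_mul_ofNat, h.ne]
  | more n ih₁ ih₂ =>
    obtain ⟨k, rfl⟩ := Nat.exists_eq_add_one_of_ne_zero (by omega : k ≠ 0)
    push_cast at ih₂ ⊢
    rw [coeff_U_add_two_succ, ih₂ (by omega), ih₁ (by omega)]
    simp

theorem coeff_U_eq_zero_of_mod_two_ne {n k : ℕ} (h : n % 2 ≠ k % 2) : (U R n).coeff k = 0 := by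
  induction n using Nat.twoStepInduction generalizing k with
  | zero => simp [coeff_one, show k ≠ 0 by omega]
  | one => simp [coeff_X, mul_comm (2 : R[X]), coeff_mul_ofNat, show 1 ≠ k by omega]
  | more n ih₁ ih₂ =>
    push_cast at ih₂ ⊢
    cases k with
    | zero => rw [coeff_U_add_two_zero, ih₁ (by omega), neg_zero]
    | succ k => rw [coeff_U_add_two_succ, ih₂ (by omega), ih₁ (by omega), mul_zero, sub_zero]

theorem coeff_U_add_two_mul (k j : ℕ) :
    (U R (k + 2 * j : ℕ)).coeff k = (-1) ^ j * (k + j).choose j * 2 ^ k := by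
  suffices ∀ n, k + 2 * j = n → (U R n).coeff k = (-1) ^ j * (k + j).choose j * 2 ^ k from
    this _ rfl
  intro n hn
  induction n using Nat.twoStepInduction generalizing k j with
  | zero =>
    obtain ⟨rfl, rfl⟩ : k = 0 ∧ j = 0 := by omega
    simp
  | one =>
    obtain ⟨rfl, rfl⟩ : k = 1 ∧ j = 0 := by omega
    simp [coeff_X, mul_comm (2 : R[X]), coeff_mul_ofNat]
  | more n ih₁ ih₂ =>
    push_cast at ih₂ ⊢
    rcases k with _ | k <;> rcases j with _ | j
    · omega
    · rw [coeff_U_add_two_zero, ih₁ 0 j (by omega)]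
      simp [pow_succ]
    · obtain rfl : k = n + 1 := by omega
      rw [coeff_U_add_two_succ, ih₂ (n + 1) 0 (by omega), coeff_U_eq_zero_of_lt (by omega)]
      simp [pow_succ, mul_comm]
    · rw [coeff_U_add_two_succ, ih₂ k (j + 1) (by omega), ih₁ (k + 1) j (by omega),
        show k + (j + 1) = k + j + 1 by omega, show k + 1 + j = k + j + 1 by omega,
        show k + 1 + (j + 1) = k + j + 1 + 1 by omega, Nat.choose_succ_succ' (k + j + 1) j]
      push_cast
      ring

end Polynomial.Chebyshev

theorem Nat.choose_add_mul_choose_sub {k i : ℕ} (j : ℕ) (hi : i ≤ k) :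
    (k + j).choose i * (k + j - i).choose j = (k + j).choose j * k.choose i := by
  rw [← Nat.choose_symm (by omega : i ≤ k + j), Nat.choose_mul (by omega),
    Nat.add_sub_cancel_right, show k + j - i - j = k - i by omega, Nat.choose_symm hi]

theorem Nat.sum_range_choose_add_mul_choose_sub (k j : ℕ) :
    ∑ i ∈ range (k + 1), (k + j).choose i * (k + j - i).choose j =
      (k + j).choose j * 2 ^ k := by
  rw [sum_congr rfl fun i hi => choose_add_mul_choose_sub j (Nat.lt_succ_iff.mp (mem_range.mp hi)),
    ← mul_sum, sum_range_choose]

/-- For 0 ≤ k ≤ n, the coefficient of `x^k` in `U_n` equals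
`(-1)^{(n-k)/2} ∑_{i=0}^{k} C((n+k)/2, i) C((n+k)/2 - i, (n-k)/2)` when n, k have the same
parity, and 0 otherwise. -/
theorem statement16 (n k : ℕ) (hk : k ≤ n) :
    (Polynomial.Chebyshev.U ℤ (n : ℤ)).coeff k =
      if n % 2 = k % 2 then
        (-1) ^ ((n - k) / 2) * ∑ i ∈ Finset.range (k + 1),
          (((n + k) / 2).choose i : ℤ) * (((n + k) / 2 - i).choose ((n - k) / 2) : ℤ)
      else 0 := by
  split_ifs with hpar
  · obtain ⟨j, rfl⟩ : ∃ j, n = k + 2 * j := ⟨(n - k) / 2, by omega⟩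
    rw [show (k + 2 * j - k) / 2 = j by omega, show (k + 2 * j + k) / 2 = k + j by omega,
      Chebyshev.coeff_U_add_two_mul, mul_assoc]
    congr 1
    exact_mod_cast (Nat.sum_range_choose_add_mul_choose_sub k j).symm
  · exact Chebyshev.coeff_U_eq_zero_of_mod_two_ne hpar
end
end
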